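/- Let K be a compact Hausdorff space and X = C(K, ℝ) the Banach space of continuous real-valued functions on K with the supremum norm. If no point of ext(B_{X*}) is a point of continuity of the identity map I : (B_{X*}, w*) → (B_{X*}, w), then no point of the unit sphere S_{X*} is a point of continuity of I. -/

import Mathlib

/-!
If `K` has an isolated point `x`, the indicator `χ` of `{x}` is continuous, and the estimate
`‖g - δₓ‖ ≤ 2 (1 - g χ)` on the unit ball shows both that `δₓ` is an extreme point and that it is a
point of continuity, since `g ↦ g χ` is weak*-continuous; this contradicts the hypothesis.

Otherwise every cofinite set is dense. A nonzero `f` keeps a positive distance from the span of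
`{δ_y : y ∉ F}` for a suitable finite `F`, so by Hahn–Banach it is not in the weak closure of that
span. Yet partitions of unity exhibit `f` as a weak* limit of functionals of norm `≤ 1` in this
span, so `f` is not a point of continuity.
-/

open NormedSpace Filter Topology

noncomputable section

/-- `f` is a point of continuity of the identity map
`I : (B_{E*}, w*) → (B_{E*}, w)` between the closed unit ball of the dual of `E`
with the relative weak-* topology and the same set with the relative weak topology. -/
def IsPoC {E : Type*} [NormedAddCommGroup E] [NormedSpace ℝ E] (f : StrongDual ℝ E) : Prop :=
  ContinuousWithinAt
    (fun g : WeakDual ℝ E => toWeakSpace ℝ (StrongDual ℝ E) (WeakDual.toStrongDual g))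
    {g : WeakDual ℝ E | ‖WeakDual.toStrongDual g‖ ≤ 1}
    (StrongDual.toWeakDual f)

theorem WeakDual.mem_closure_of_forall_finset {E : Type*} [AddCommGroup E] [TopologicalSpace E]
    [Module ℝ E] {A : Set (WeakDual ℝ E)} {f : WeakDual ℝ E}
    (h : ∀ (T : Finset E) (ε : ℝ), 0 < ε → ∃ g ∈ A, ∀ u ∈ T, |g u - f u| ≤ ε) :
    f ∈ closure A := by
  classical
  choose g hgA hg using fun d : Finset E × ℕ => h d.1 (1 / (d.2 + 1)) Nat.one_div_pos_of_nat
  refine mem_closure_of_tendsto (f := g) (b := atTop) ?_ (Eventually.of_forall hgA)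
  refine tendsto_iff_forall_eval_tendsto_topDualPairing.2 fun u =>
    Metric.tendsto_atTop.2 fun ε hε => ?_
  obtain ⟨N, hN⟩ := exists_nat_one_div_lt hε
  refine ⟨({u}, N), fun d hd => ?_⟩
  calc |g d u - f u| ≤ 1 / (d.2 + 1) := hg d u (hd.1 (Finset.mem_singleton_self u))
    _ ≤ 1 / (N + 1) := Nat.one_div_le_one_div hd.2
    _ < ε := hN

theorem IsPoC.mem_closure_of_convex {E : Type*} [NormedAddCommGroup E] [NormedSpace ℝ E]
    {f : StrongDual ℝ E} (hf : IsPoC f) {C : Set (StrongDual ℝ E)} (hC : Convex ℝ C)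
    (hfC : StrongDual.toWeakDual f ∈
      closure {g : WeakDual ℝ E | ‖WeakDual.toStrongDual g‖ ≤ 1 ∧ WeakDual.toStrongDual g ∈ C}) :
    f ∈ closure C := by
  have hweak : toWeakSpace ℝ _ f ∈ closure (toWeakSpace ℝ _ '' C) :=
    closure_mono (Set.image_mono fun g hg => hg.2)
      ((hf.mono fun g hg => hg.1).mem_closure_image hfC)
  obtain ⟨g, hg, hgf⟩ := (hC.toWeakSpace_closure ℝ).symm ▸ hweak
  rwa [(toWeakSpace ℝ _).injective hgf] at hg

section EvalFunctionals

variable {K : Type*} [TopologicalSpace K]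

local notation "δ" => ContinuousMap.evalCLM (M := ℝ) ℝ

theorem linearCombination_evalCLM_apply (c : K →₀ ℝ) (u : C(K, ℝ)) :
    Finsupp.linearCombination ℝ δ c u = c.sum fun y a => a * u y := by
  simp [Finsupp.linearCombination_apply, Finsupp.sum]

variable [CompactSpace K]

theorem norm_evalCLM_le (x : K) : ‖δ x‖ ≤ 1 :=
  ContinuousLinearMap.opNorm_le_bound _ zero_le_one fun u => by
    simpa using u.norm_coe_le_norm x

theorem ContinuousMap.exists_norm_le_eqOn_finset [T2Space K] (A : Finset K) (v : K → ℝ) {M : ℝ}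
    (hM : 0 ≤ M) (hv : ∀ y ∈ A, |v y| ≤ M) :
    ∃ u : C(K, ℝ), ‖u‖ ≤ M ∧ Set.EqOn u v A := by
  obtain ⟨u, huM, hu⟩ := ContinuousMap.exists_restrict_eq_forall_mem_of_closed
    (s := (A : Set K)) ⟨fun y => v y, continuous_of_discreteTopology⟩ (t := Set.Icc (-M) M)
    (fun y => abs_le.1 (hv y y.2)) ⟨0, by simp [hM]⟩ A.finite_toSet.isClosed
  exact ⟨u, (u.norm_le hM).2 fun y => abs_le.2 (huM y), fun y hy => DFunLike.congr_fun hu ⟨y, hy⟩⟩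

/-- Testing against a function that agrees with `u` on `c.support` and vanishes on `l.support`. -/
theorem norm_linearCombination_evalCLM_le_norm_sub [T2Space K] {c l : K →₀ ℝ}
    (hcl : Disjoint c.support l.support) :
    ‖Finsupp.linearCombination ℝ δ c‖ ≤
      ‖Finsupp.linearCombination ℝ δ c - Finsupp.linearCombination ℝ δ l‖ := by
  classical
  refine ContinuousLinearMap.opNorm_le_bound _ (by positivity) fun u => ?_
  obtain ⟨w, hw, hwu⟩ := ContinuousMap.exists_norm_le_eqOn_finset (c.support ∪ l.support)
    (fun y => if y ∈ c.support then u y else 0) (norm_nonneg u) fun y _ => by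
      split_ifs
      · exact u.norm_coe_le_norm y
      · simp
  have hc : Finsupp.linearCombination ℝ δ c u = Finsupp.linearCombination ℝ δ c w := by
    simp only [linearCombination_evalCLM_apply]
    refine Finsupp.sum_congr fun y hy => ?_
    simp only [hwu (Finset.mem_union_left _ hy), if_pos hy]
  have hl : Finsupp.linearCombination ℝ δ l w = 0 := by
    rw [linearCombination_evalCLM_apply]
    refine Finset.sum_eq_zero fun y hy => ?_
    simp only [hwu (Finset.mem_union_right _ hy), if_neg (Finset.disjoint_right.1 hcl hy), mul_zero]
  calc ‖Finsupp.linearCombination ℝ δ c u‖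
      = ‖(Finsupp.linearCombination ℝ δ c - Finsupp.linearCombination ℝ δ l) w‖ := by
        rw [hc, sub_apply, hl, sub_zero]
    _ ≤ ‖Finsupp.linearCombination ℝ δ c - Finsupp.linearCombination ℝ δ l‖ * ‖w‖ :=
        ContinuousLinearMap.le_opNorm _ _
    _ ≤ ‖Finsupp.linearCombination ℝ δ c - Finsupp.linearCombination ℝ δ l‖ * ‖u‖ := by gcongr

/-- Either `f` is far from every combination of point evaluations (take `F = ∅`), or it is close to
one, `c`, and then it stays far from the evaluations off `c.support`. -/
theorem exists_finset_notMem_closure_span_evalCLM [T2Space K] {f : StrongDual ℝ C(K, ℝ)}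
    (hf : f ≠ 0) :
    ∃ F : Finset K,
      f ∉ closure (Submodule.span ℝ (δ '' (F : Set K)ᶜ) : Set (StrongDual ℝ C(K, ℝ))) := by
  by_cases hfδ : f ∈ closure (Submodule.span ℝ (δ '' ((∅ : Finset K) : Set K)ᶜ) :
      Set (StrongDual ℝ C(K, ℝ)))
  · have hf' : 0 < ‖f‖ := by positivity
    have hclose := fun {s : Set (StrongDual ℝ C(K, ℝ))} (hfs : f ∈ closure s) =>
      (Metric.mem_closure_iff (α := StrongDual ℝ C(K, ℝ))).1 hfs (‖f‖ / 3) (by positivity)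
    obtain ⟨_, hc, hfc⟩ := hclose hfδ
    obtain ⟨c, -, rfl⟩ := (Finsupp.mem_span_image_iff_linearCombination ℝ).1 hc
    refine ⟨c.support, fun hF => ?_⟩
    obtain ⟨_, hl, hfl⟩ := hclose hF
    obtain ⟨l, hlc, rfl⟩ := (Finsupp.mem_span_image_iff_linearCombination ℝ).1 hl
    have hcl : ‖Finsupp.linearCombination ℝ δ c‖ ≤
        ‖Finsupp.linearCombination ℝ δ c - Finsupp.linearCombination ℝ δ l‖ :=
      norm_linearCombination_evalCLM_le_norm_sub
        (Finset.disjoint_right.2 fun y hy hyc => hlc hy hyc)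
    rw [dist_eq_norm f] at hfc hfl
    linarith [norm_le_norm_add_norm_sub' f (Finsupp.linearCombination ℝ δ c),
      norm_sub_le_norm_sub_add_norm_sub (Finsupp.linearCombination ℝ δ c) f
        (Finsupp.linearCombination ℝ δ l), norm_sub_rev f (Finsupp.linearCombination ℝ δ c)]
  · exact ⟨∅, hfδ⟩

theorem ContinuousMap.norm_le_of_eq_sum_mul {ι : Type*} [Fintype ι] {ρ : ι → C(K, ℝ)}
    (hρ0 : ∀ i z, 0 ≤ ρ i z) (hρ1 : ∀ z, ∑ i, ρ i z = 1) {φ : C(K, ℝ)} {g : ι → K → ℝ} {M : ℝ}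
    (hM : 0 ≤ M) (hφ : ∀ z, φ z = ∑ i, ρ i z * g i z) (hg : ∀ i z, ρ i z ≠ 0 → |g i z| ≤ M) :
    ‖φ‖ ≤ M := by
  refine (φ.norm_le hM).2 fun z => ?_
  have hterm : ∀ i, |ρ i z * g i z| ≤ ρ i z * M := fun i => by
    rw [abs_mul, abs_of_nonneg (hρ0 i z)]
    by_cases hz : ρ i z = 0
    · simp [hz]
    · exact mul_le_mul_of_nonneg_left (hg i z hz) (hρ0 i z)
  calc ‖φ z‖ = |∑ i, ρ i z * g i z| := by rw [hφ, Real.norm_eq_abs]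
    _ ≤ ∑ i, ρ i z * M :=
      (Finset.abs_sum_le_sum_abs _ _).trans (Finset.sum_le_sum fun i _ => hterm i)
    _ = M := by rw [← Finset.sum_mul, hρ1 z, one_mul]

theorem exists_partitionOfUnity_samples_mem_dense [T2Space K] {S : Set K} (hS : Dense S)
    (T : Finset C(K, ℝ)) {ε : ℝ} (hε : 0 < ε) :
    ∃ (t : Finset K) (ρ : t → C(K, ℝ)) (Y : t → K), (∀ i z, 0 ≤ ρ i z) ∧
      (∀ z, ∑ i, ρ i z = 1) ∧ (∀ i, Y i ∈ S) ∧
      ∀ i z, ρ i z ≠ 0 → ∀ u ∈ T, |u (Y i) - u z| ≤ ε := by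
  set V : K → Set K := fun y => {z | ∀ u ∈ T, |u z - u y| < ε / 2}
  have hVo : ∀ y, IsOpen (V y) := fun y => by
    simp only [V, Set.ofPred_forall]
    exact isOpen_biInter_finset fun u _ => isOpen_lt (by fun_prop) continuous_const
  obtain ⟨t, ht⟩ := isCompact_univ.elim_finite_subcover V hVo
    fun y _ => Set.mem_iUnion.2 ⟨y, fun u _ => by simpa using half_pos hε⟩
  obtain ⟨ρ, hρV⟩ := PartitionOfUnity.exists_isSubordinate isClosed_univ (fun i : t => V i)
    (fun i => hVo i) (by simpa [Set.iUnion_subtype] using ht)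
  have hρV' : ∀ i z, ρ i z ≠ 0 → z ∈ V i := fun i z hz => hρV i (subset_tsupport _ hz)
  have hsample : ∀ i : t, ∃ y ∈ S, (Function.support (ρ i)).Nonempty → ρ i y ≠ 0 := fun i => by
    by_cases hi : (Function.support (ρ i)).Nonempty
    · obtain ⟨y, hyS, hy⟩ := hS.exists_mem_open (ρ i).continuous.isOpen_support hi
      exact ⟨y, hyS, fun _ => hy⟩
    · obtain ⟨y, hyS⟩ := hS.nonempty_iff.2 ⟨i.1⟩
      exact ⟨y, hyS, fun h => absurd h hi⟩
  choose Y hYS hY using hsample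
  refine ⟨t, fun i => ρ i, Y, fun i z => ρ.nonneg i z, fun z => ?_, hYS, fun i z hz u hu => ?_⟩
  · rw [← finsum_eq_sum_of_fintype, ρ.sum_eq_one (Set.mem_univ z)]
  · have hYz := hρV' i z hz u hu
    have hYi := hρV' i (Y i) (hY i ⟨z, hz⟩) u hu
    rw [abs_sub_lt_iff] at hYz hYi
    rw [abs_le]
    constructor <;> linarith

theorem exists_mem_span_evalCLM_approx [T2Space K] {S : Set K} (hS : Dense S)
    {f : StrongDual ℝ C(K, ℝ)} (hf : ‖f‖ ≤ 1) (T : Finset C(K, ℝ)) {ε : ℝ} (hε : 0 < ε) :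
    ∃ ν ∈ Submodule.span ℝ (δ '' S), ‖ν‖ ≤ 1 ∧ ∀ u ∈ T, |ν u - f u| ≤ ε := by
  obtain ⟨t, ρ, Y, hρ0, hρ1, hYS, hosc⟩ := exists_partitionOfUnity_samples_mem_dense hS T hε
  have hν : ∀ u, (∑ i, f (ρ i) • δ (Y i)) u = f (∑ i, u (Y i) • ρ i) := fun u => by
    simp [map_sum, mul_comm]
  refine ⟨∑ i, f (ρ i) • δ (Y i), Submodule.sum_mem _ fun i _ =>
    Submodule.smul_mem _ _ (Submodule.subset_span ⟨Y i, hYS i, rfl⟩), ?_, fun u hu => ?_⟩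
  · refine ContinuousLinearMap.opNorm_le_bound _ zero_le_one fun u => ?_
    rw [hν, one_mul]
    refine (f.le_opNorm _).trans (mul_le_of_le_one_left (norm_nonneg _) hf |>.trans ?_)
    exact ContinuousMap.norm_le_of_eq_sum_mul hρ0 hρ1 (norm_nonneg u) (g := fun i _ => u (Y i))
      (fun z => by simp [mul_comm]) fun i _ _ => u.norm_coe_le_norm (Y i)
  · rw [hν, ← map_sub]
    refine (Real.norm_eq_abs _ ▸ f.le_opNorm _).trans
      (mul_le_of_le_one_left (norm_nonneg _) hf |>.trans ?_)
    refine ContinuousMap.norm_le_of_eq_sum_mul hρ0 hρ1 hε.le (g := fun i z => u (Y i) - u z)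
      (fun z => ?_) fun i z hz => hosc i z hz u hu
    simp only [mul_sub, Finset.sum_sub_distrib, ← Finset.sum_mul, hρ1, one_mul]
    simp [mul_comm]

variable {x : K} {χ : C(K, ℝ)}

theorem apply_le_one_of_eq_indicator (hχ : ⇑χ = ({x} : Set K).indicator 1)
    {g : StrongDual ℝ C(K, ℝ)} (hg : ‖g‖ ≤ 1) : g χ ≤ 1 := by
  have hχ1 : ‖χ‖ ≤ 1 := (χ.norm_le zero_le_one).2 fun y => by
    by_cases hy : y = x <;> simp [hχ, hy]
  exact (le_abs_self _).trans ((g.le_opNorm χ).trans (mul_le_one₀ hg (norm_nonneg _) hχ1))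

theorem apply_le_mul_sub_of_apply_eq_zero (hχ : ⇑χ = ({x} : Set K).indicator 1)
    {g : StrongDual ℝ C(K, ℝ)} (hg : ‖g‖ ≤ 1) {u : C(K, ℝ)} (hu : u x = 0) :
    g u ≤ ‖u‖ * (1 - g χ) := by
  have hbound : ‖u + ‖u‖ • χ‖ ≤ ‖u‖ := ((u + ‖u‖ • χ).norm_le (norm_nonneg u)).2 fun y => by
    by_cases hy : y = x
    · simp [hy, hu, hχ]
    · simpa [hχ, hy] using u.norm_coe_le_norm y
  have := (le_abs_self _).trans ((g.le_opNorm _).trans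
    (mul_le_mul hg hbound (norm_nonneg _) zero_le_one))
  simp only [map_add, map_smul, smul_eq_mul] at this
  linarith

theorem norm_sub_evalCLM_le (hχ : ⇑χ = ({x} : Set K).indicator 1)
    {g : StrongDual ℝ C(K, ℝ)} (hg : ‖g‖ ≤ 1) :
    ‖g - δ x‖ ≤ 2 * (1 - g χ) := by
  have hgχ := apply_le_one_of_eq_indicator hχ hg
  refine ContinuousLinearMap.opNorm_le_bound _ (by linarith) fun u => ?_
  set v := u - u x • χ
  have hvx : v x = 0 := by simp [v, hχ]
  have hv : ‖v‖ ≤ ‖u‖ := (v.norm_le (norm_nonneg u)).2 fun y => by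
    by_cases hy : y = x
    · simp [v, hy, hχ]
    · simpa [v, hχ, hy] using u.norm_coe_le_norm y
  have hgv := apply_le_mul_sub_of_apply_eq_zero hχ hg hvx
  have hgv' := apply_le_mul_sub_of_apply_eq_zero hχ hg (u := -v) (by simp [hvx])
  have hux := abs_le.1 (u.norm_coe_le_norm x)
  have hsplit : (g - δ x) u = g v + u x * (g χ - 1) := by
    simp [v]
    ring
  rw [hsplit, Real.norm_eq_abs, abs_le]
  simp only [map_neg, norm_neg] at hgv'
  constructor <;> nlinarith

theorem evalCLM_mem_extremePoints (hχ : ⇑χ = ({x} : Set K).indicator 1) :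
    δ x ∈ Set.extremePoints ℝ (Metric.closedBall (0 : StrongDual ℝ C(K, ℝ)) 1) := by
  have hball : ∀ g : StrongDual ℝ C(K, ℝ), g ∈ Metric.closedBall 0 1 ↔ ‖g‖ ≤ 1 := fun g => by
    rw [Metric.mem_closedBall, dist_zero_right g]
  simp only [mem_extremePoints, hball]
  refine ⟨norm_evalCLM_le x, fun g₁ hg₁ g₂ hg₂ ⟨a, b, ha, hb, hab, habx⟩ => ?_⟩
  have hχ₁ := apply_le_one_of_eq_indicator hχ hg₁
  have hχ₂ := apply_le_one_of_eq_indicator hχ hg₂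
  have hsum : a * g₁ χ + b * g₂ χ = 1 := by
    simpa [hχ] using congr($habx χ)
  have heq : ∀ g : StrongDual ℝ C(K, ℝ), ‖g‖ ≤ 1 → g χ = 1 → g = δ x := fun g hg hgχ => by
    have := norm_sub_evalCLM_le hχ hg
    rw [hgχ, sub_self, mul_zero] at this
    exact sub_eq_zero.1 (norm_le_zero_iff.1 this)
  exact ⟨heq g₁ hg₁ (by nlinarith), heq g₂ hg₂ (by nlinarith)⟩

theorem isPoC_evalCLM (hχ : ⇑χ = ({x} : Set K).indicator 1) : IsPoC (δ x) := by
  refine ((toWeakSpaceCLM ℝ (StrongDual ℝ C(K, ℝ))).continuous.tendsto (δ x)).comp ?_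
  refine (Metric.tendsto_nhds (α := StrongDual ℝ C(K, ℝ))).2 fun ε hε => ?_
  have hnhds : {g : WeakDual ℝ C(K, ℝ) | 1 - ε / 4 < g χ} ∈ 𝓝 (StrongDual.toWeakDual (δ x)) :=
    (isOpen_lt continuous_const (WeakDual.eval_continuous χ)).mem_nhds (by simp [hχ]; linarith)
  filter_upwards [nhdsWithin_le_nhds hnhds, self_mem_nhdsWithin] with g hgχ hg
  rw [dist_eq_norm (WeakDual.toStrongDual g)]
  have hgχ' : 1 - ε / 4 < WeakDual.toStrongDual g χ := hgχ
  linarith [norm_sub_evalCLM_le hχ hg]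

end EvalFunctionals

/-- Let `K` be a compact Hausdorff space and `X = C(K, ℝ)`.  If no
extreme point of `B_{X*}` is a point of continuity of `I : (B_{X*}, w*) → (B_{X*}, w)`,
then no point of the unit sphere `S_{X*}` is a point of continuity of `I`. -/
theorem stmt_12 {K : Type*} [TopologicalSpace K] [CompactSpace K] [T2Space K]
    (h : ∀ f ∈ Set.extremePoints ℝ (Metric.closedBall (0 : StrongDual ℝ C(K, ℝ)) 1), ¬ IsPoC f) :
    ∀ f : StrongDual ℝ C(K, ℝ), ‖f‖ = 1 → ¬ IsPoC f := by
  intro f hf hPoC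
  by_cases hiso : ∃ x : K, IsOpen ({x} : Set K)
  · obtain ⟨x, hx⟩ := hiso
    have hχ : Continuous (({x} : Set K).indicator (1 : K → ℝ)) :=
      IsClopen.continuous_indicator ⟨isClosed_singleton, hx⟩ continuous_const
    exact h _ (evalCLM_mem_extremePoints (χ := ⟨_, hχ⟩) rfl) (isPoC_evalCLM (χ := ⟨_, hχ⟩) rfl)
  · have : ∀ x : K, (𝓝[≠] x).NeBot := fun x =>
      ⟨fun hx => hiso ⟨x, (isOpen_singleton_iff_punctured_nhds x).2 hx⟩⟩
    obtain ⟨F, hF⟩ := exists_finset_notMem_closure_span_evalCLM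
      (norm_ne_zero_iff (E := StrongDual ℝ C(K, ℝ)).1 (hf ▸ one_ne_zero))
    have hS : Dense ((F : Set K)ᶜ) := by
      simpa [Set.compl_eq_univ_sdiff] using dense_univ.sdiff_finset F
    refine hF (hPoC.mem_closure_of_convex (Submodule.convex _) ?_)
    refine WeakDual.mem_closure_of_forall_finset fun T ε hε => ?_
    obtain ⟨ν, hνS, hν1, hνT⟩ := exists_mem_span_evalCLM_approx hS hf.le T hε
    exact ⟨StrongDual.toWeakDual ν, ⟨hν1, hνS⟩, hνT⟩
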